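/- Let Ψ = (ψ_i)_{i∈I} be an arbitrary sequence in H. Then the analysis operator of the projected sequence π_{H_Ψ}Ψ, regarded as a sequence in H, satisfies D(C_{π_{H_Ψ}Ψ}) = D(C_Ψ) ⊕ H_Ψ^⊥ (an orthogonal direct sum), C_{π_{H_Ψ}Ψ} f = C_Ψ(π_{H_Ψ} f) for all f ∈ D(C_{π_{H_Ψ}Ψ}), and consequently C_{π_{H_Ψ}Ψ} is densely defined in H. -/

import Mathlib

noncomputable section

open scoped ENNReal NNReal InnerProductSpace Classical
open TopologicalSpace

local notation "⟪" x ", " y "⟫" => @inner ℂ _ _ x y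

section Ops

variable {H₁ H₂ : Type*} [NormedAddCommGroup H₁] [InnerProductSpace ℂ H₁]
  [NormedAddCommGroup H₂] [InnerProductSpace ℂ H₂]

/-- `T` is bounded from below: there is `m > 0` with `m ‖f‖ ≤ ‖T f‖` for all `f ∈ D(T)`. -/
def LinearPMap.IsBddBelow (T : H₁ →ₗ.[ℂ] H₂) : Prop :=
  ∃ m : ℝ, 0 < m ∧ ∀ f : T.domain, m * ‖(f : H₁)‖ ≤ ‖T f‖

/-- The range of a partially defined operator. -/
def LinearPMap.ran (T : H₁ →ₗ.[ℂ] H₂) : Set H₂ :=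
  Set.range fun x : T.domain => T x

/-- `T` is surjective. -/
def LinearPMap.Surj (T : H₁ →ₗ.[ℂ] H₂) : Prop :=
  ∀ y : H₂, ∃ x : T.domain, T x = y

/-- `T` is injective. -/
def LinearPMap.Inj (T : H₁ →ₗ.[ℂ] H₂) : Prop :=
  ∀ x y : T.domain, T x = T y → x = y

/-- `T` is boundedly invertible (BI): there is an everywhere defined bounded operator
`S : H₂ → H₁` with `T (S g) = g` for all `g ∈ H₂` and `S (T f) = f` for all `f ∈ D(T)`. -/
def LinearPMap.IsBI (T : H₁ →ₗ.[ℂ] H₂) : Prop :=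
  ∃ S : H₂ →L[ℂ] H₁, (∀ g : H₂, ∃ hg : S g ∈ T.domain, T ⟨S g, hg⟩ = g) ∧
    ∀ f : T.domain, S (T f) = (f : H₁)

/-- `T` is boundedly invertible onto its range (BIR): `ran T` is closed and `T`, viewed as an
operator into the Hilbert space `ran T`, is boundedly invertible. -/
def LinearPMap.IsBIR (T : H₁ →ₗ.[ℂ] H₂) : Prop :=
  _root_.IsClosed (T.ran : Set H₂) ∧
  ∃ S : (LinearMap.range T.toFun : Submodule ℂ H₂) →L[ℂ] H₁,
    (∀ g : LinearMap.range T.toFun, ∃ hg : S g ∈ T.domain, T ⟨S g, hg⟩ = (g : H₂)) ∧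
    ∀ f : T.domain, S ⟨T f, LinearMap.mem_range_self _ f⟩ = (f : H₁)

end Ops

section Seq

variable {I : Type*} [Countable I]
variable {H : Type*} [NormedAddCommGroup H] [InnerProductSpace ℂ H]

/-- `ψ` is a lower frame sequence: there is `A > 0` with `A ‖f‖² ≤ ∑ᵢ |⟨f, ψᵢ⟩|²` for all
`f ∈ H`, where the right-hand side is computed in `ℝ≥0∞` (it may be infinite). -/
def IsLowerFrameSeq (ψ : I → H) : Prop :=
  ∃ A : ℝ, 0 < A ∧ ∀ f : H,
    ENNReal.ofReal (A * ‖f‖ ^ 2) ≤ ∑' i, (‖⟪f, ψ i⟫‖₊ : ℝ≥0∞) ^ 2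

/-- `ψ` is a Riesz-Fischer sequence: there is `A > 0` with `A ‖c‖² ≤ ‖∑ᵢ cᵢ ψᵢ‖²` for all
finitely supported scalar sequences `c`. -/
def IsRieszFischerSeq (ψ : I → H) : Prop :=
  ∃ A : ℝ, 0 < A ∧ ∀ c : I →₀ ℂ,
    A * ∑ i ∈ c.support, ‖c i‖ ^ 2 ≤ ‖∑ i ∈ c.support, c i • ψ i‖ ^ 2

/-- `ψ` is minimal: no element lies in the closed span of the remaining ones. -/
def IsMinimalSeq (ψ : I → H) : Prop :=
  ∀ j : I, ψ j ∉ (Submodule.span ℂ (ψ '' {i | i ≠ j})).topologicalClosure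

/-- `ψ` is complete: its closed linear span is all of `H`. -/
def IsCompleteSeq (ψ : I → H) : Prop :=
  (Submodule.span ℂ (Set.range ψ)).topologicalClosure = ⊤

/-- `ψ` is ω-independent: `∑ᵢ cᵢ ψᵢ = 0` (convergent in `H`) implies `cᵢ = 0` for all `i`. -/
def IsOmegaIndependent (ψ : I → H) : Prop :=
  ∀ c : I → ℂ, HasSum (fun i => c i • ψ i) 0 → ∀ i, c i = 0

/-- `φ` is biorthogonal to `ψ`: `⟨ψᵢ, φⱼ⟩ = δᵢⱼ`. -/
def IsBiorthogonal (ψ φ : I → H) : Prop :=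
  ∀ i j, ⟪ψ i, φ j⟫ = if i = j then 1 else 0

/-- `ψ` is exact: removing any single element strictly decreases the closed span. -/
def IsExactSeq (ψ : I → H) : Prop :=
  ∀ k : I, (Submodule.span ℂ (Set.range ψ)).topologicalClosure ≠
    (Submodule.span ℂ (ψ '' {i | i ≠ k})).topologicalClosure

/-- The domain of the synthesis operator of `ψ`: all `c ∈ ℓ²(I)` such that `∑ᵢ cᵢ ψᵢ`
converges in `H`. -/
def synthesisDomain (ψ : I → H) : Submodule ℂ (lp (fun _ : I => ℂ) 2) where
  carrier := {c | ∃ y : H, HasSum (fun i => c i • ψ i) y}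
  zero_mem' := ⟨0, by
    simpa [lp.coeFn_zero] using (hasSum_zero : HasSum (fun _ : I => (0 : H)) 0)⟩
  add_mem' := by
    rintro c d ⟨y, hy⟩ ⟨z, hz⟩
    exact ⟨y + z, by simpa [lp.coeFn_add, add_smul] using hy.add hz⟩
  smul_mem' := by
    rintro a c ⟨y, hy⟩
    exact ⟨a • y, by simpa [lp.coeFn_smul, smul_smul] using hy.const_smul a⟩

/-- The synthesis operator `D_ψ : ℓ²(I) ⊇ D(D_ψ) → H`, `c ↦ ∑ᵢ cᵢ ψᵢ`. -/
def synthesisOp (ψ : I → H) : (lp (fun _ : I => ℂ) 2) →ₗ.[ℂ] H where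
  domain := synthesisDomain ψ
  toFun :=
    { toFun := fun c => ∑' i, ((c : lp (fun _ : I => ℂ) 2) : ∀ _ : I, ℂ) i • ψ i
      map_add' := by
        rintro ⟨c, y, hy⟩ ⟨d, z, hz⟩
        have hyd : HasSum (fun i => ((c + d : lp (fun _ : I => ℂ) 2) : ∀ _ : I, ℂ) i • ψ i)
            (y + z) := by simpa [lp.coeFn_add, add_smul] using hy.add hz
        simp only [Submodule.coe_add]
        rw [hy.tsum_eq, hz.tsum_eq, hyd.tsum_eq]
      map_smul' := by
        rintro a ⟨c, y, hy⟩
        have hya : HasSum (fun i => ((a • c : lp (fun _ : I => ℂ) 2) : ∀ _ : I, ℂ) i • ψ i)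
            (a • y) := by simpa [lp.coeFn_smul, smul_smul] using hy.const_smul a
        simp only [SetLike.val_smul, RingHom.id_apply]
        rw [hy.tsum_eq, hya.tsum_eq] }

/-- The domain of the analysis operator of `ψ`: all `f ∈ H` with `(⟨f, ψᵢ⟩)ᵢ ∈ ℓ²(I)`. -/
def analysisDomain (ψ : I → H) : Submodule ℂ H where
  carrier := {f | Memℓp (fun i => ⟪ψ i, f⟫) 2}
  zero_mem' := by
    show Memℓp _ 2
    simp only [inner_zero_right]
    exact (zero_memℓp : Memℓp (0 : ∀ _ : I, ℂ) 2)
  add_mem' := by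
    intro f g hf hg
    have e : (fun i => ⟪ψ i, f + g⟫) = (fun i => ⟪ψ i, f⟫) + (fun i => ⟪ψ i, g⟫) :=
      funext fun i => inner_add_right _ _ _
    show Memℓp _ 2
    rw [e]
    exact hf.add hg
  smul_mem' := by
    intro a f hf
    simpa [inner_smul_right] using hf.const_mul a

/-- The analysis operator `C_ψ : H ⊇ D(C_ψ) → ℓ²(I)`, `f ↦ (⟨f, ψᵢ⟩)ᵢ`. -/
def analysisOp (ψ : I → H) : H →ₗ.[ℂ] (lp (fun _ : I => ℂ) 2) where
  domain := analysisDomain ψ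
  toFun :=
    { toFun := fun f => ⟨fun i => ⟪ψ i, (f : H)⟫, f.2⟩
      map_add' := by
        intro f g
        exact lp.ext (funext fun i => by simp [inner_add_right]; rfl)
      map_smul' := by
        intro a f
        exact lp.ext (funext fun i => by simp [inner_smul_right]) }

end Seq

section Proj

variable {I : Type*} [Countable I]
variable {H : Type*} [NormedAddCommGroup H] [InnerProductSpace ℂ H] [CompleteSpace H]

/-- The space `H_ψ`: the closure of the domain of the analysis operator of `ψ`. -/
def hilPsi (ψ : I → H) : Submodule ℂ H := (analysisDomain ψ).topologicalClosure

instance hilPsi.instCompleteSpace (ψ : I → H) : CompleteSpace (hilPsi ψ) :=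
  (Submodule.isClosed_topologicalClosure _).completeSpace_coe

/-- The projected sequence `π_{H_ψ} ψ`, regarded as a sequence in the Hilbert space `H_ψ`. -/
def projSeq (ψ : I → H) : I → hilPsi ψ := fun i => Submodule.orthogonalProjectionOnto (hilPsi ψ) (ψ i)

end Proj

variable {I : Type*} [Countable I]
variable {H : Type*} [NormedAddCommGroup H] [InnerProductSpace ℂ H] [CompleteSpace H]
  [SeparableSpace H]

theorem statement15 (ψ : I → H) :
    analysisDomain (fun i => (projSeq ψ i : H)) = analysisDomain ψ ⊔ (hilPsi ψ)ᗮ ∧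
    (∀ f ∈ analysisDomain (fun i => (projSeq ψ i : H)),
      ((Submodule.orthogonalProjectionOnto (hilPsi ψ) f : H) ∈ analysisDomain ψ ∧
        ∀ i, ⟪(projSeq ψ i : H), f⟫ = ⟪ψ i, ((Submodule.orthogonalProjectionOnto (hilPsi ψ) f : H))⟫)) ∧
    Dense (analysisDomain (fun i => (projSeq ψ i : H)) : Set H) := by
  set K := hilPsi ψ with hK
  have key : ∀ f : H, ∀ i, ⟪(projSeq ψ i : H), f⟫ = ⟪ψ i, ((Submodule.orthogonalProjectionOnto K f : H))⟫ :=
    fun f i => K.inner_starProjection_left_eq_right (ψ i) f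
  have mem_iff : ∀ f : H, f ∈ analysisDomain (fun i => (projSeq ψ i : H)) ↔
      (Submodule.orthogonalProjectionOnto K f : H) ∈ analysisDomain ψ := by
    intro f
    show Memℓp (fun i => ⟪(projSeq ψ i : H), f⟫) 2 ↔
      Memℓp (fun i => ⟪ψ i, (Submodule.orthogonalProjectionOnto K f : H)⟫) 2
    rw [funext (key f)]
  have hle : analysisDomain ψ ≤ K := Submodule.le_topologicalClosure _
  have heq : analysisDomain (fun i => (projSeq ψ i : H)) = analysisDomain ψ ⊔ Kᗮ := by
    apply le_antisymm
    · intro f hf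
      have h1 : (Submodule.orthogonalProjectionOnto K f : H) ∈ analysisDomain ψ := (mem_iff f).mp hf
      have h2 : f - (Submodule.orthogonalProjectionOnto K f : H) ∈ Kᗮ :=
        K.sub_starProjection_mem_orthogonal f
      have := Submodule.add_mem_sup h1 h2
      simpa using this
    · apply sup_le
      · intro f hf
        rw [mem_iff]
        have : (Submodule.orthogonalProjectionOnto K f : H) = f := by
          exact K.starProjection_eq_self_iff.mpr (hle hf)
        rwa [this]
      · intro f hf
        rw [mem_iff]
        rw [Submodule.orthogonalProjectionOnto_apply_of_mem_orthogonal hf]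
        exact (analysisDomain ψ).zero_mem
  refine ⟨heq, fun f hf => ⟨(mem_iff f).mp hf, key f⟩, ?_⟩
  have htop : (analysisDomain (fun i => (projSeq ψ i : H))).topologicalClosure = ⊤ := by
    rw [heq]
    apply top_unique
    have h1 : K ⊔ Kᗮ = ⊤ := Submodule.sup_orthogonal_of_hasOrthogonalProjection
    rw [← h1]
    apply sup_le
    · rw [hK, hilPsi]
      exact Submodule.topologicalClosure_mono le_sup_left
    · exact le_trans le_sup_right (Submodule.le_topologicalClosure _)
  exact Submodule.dense_iff_topologicalClosure_eq_top.mpr htop
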